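/- Let R be a commutative ring, W_{D^2} = R[X,Y]/(X^2,Y^2), W_D = R[Z]/(Z^2), and W_{D{3}_2} as above. The cone over the diagram formed by the three copies of W_{D^2} with maps W_{i_{jk}} from W_{D{3}_2}, together with the copies of W_D equalizing overlaps (via the maps dual to d ↦ (d,0) and d ↦ (0,d) into D^2), is a limit cone: giving an element of W_{D{3}_2} is equivalent to giving elements a_{12}, a_{13}, a_{23} ∈ W_{D^2} whose restrictions along the appropriate coordinate inclusions W_{D^2} → W_D agree pairwise as specified by the shared index. -/

import Mathlib

set_option synthInstance.maxHeartbeats 1000000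
set_option maxHeartbeats 1000000

open Finset

/-- The ideal of `R[X₁,X₂,X₃]` generated by the squares `Xᵢ²` together with all
monomials of degree `3` (indices with repetition). -/
noncomputable abbrev d32Ideal (R : Type*) [CommRing R] : Ideal (MvPolynomial (Fin 3) R) :=
  Ideal.span ((Set.range fun i : Fin 3 => (MvPolynomial.X i : MvPolynomial (Fin 3) R) ^ 2) ∪
    {p | ∃ f : Fin 3 → Fin 3, p = ∏ k, MvPolynomial.X (f k)})

/-- The Weil algebra `W_{D{3}₂}`. -/
abbrev WeilD32 (R : Type*) [CommRing R] : Type _ :=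
  MvPolynomial (Fin 3) R ⧸ d32Ideal R

/-- The ideal `(X², Y²)` of `R[X,Y]`. -/
noncomputable abbrev sq2Ideal (R : Type*) [CommRing R] : Ideal (MvPolynomial (Fin 2) R) :=
  Ideal.span (Set.range fun i : Fin 2 => (MvPolynomial.X i : MvPolynomial (Fin 2) R) ^ 2)

/-- The Weil algebra `W_{D²} = R[X,Y]/(X²,Y²)`. -/
abbrev WeilD2 (R : Type*) [CommRing R] : Type _ :=
  MvPolynomial (Fin 2) R ⧸ sq2Ideal R

/-- The Weil algebra `W_D = R[Z]/(Z²)`. -/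
abbrev WeilD1 (R : Type*) [CommRing R] : Type _ :=
  Polynomial R ⧸ Ideal.span {(Polynomial.X : Polynomial R) ^ 2}

/-- `p` is the algebra map `W_{i_{jk}} : W_{D{3}₂} → W_{D²}`: `X_j ↦ X`, `X_k ↦ Y`,
remaining variable to `0`. -/
def IsProjPair {R : Type*} [CommRing R] (j k : Fin 3)
    (p : WeilD32 R →ₐ[R] WeilD2 R) : Prop :=
  p (Ideal.Quotient.mk (d32Ideal R) (MvPolynomial.X j)) =
      Ideal.Quotient.mk (sq2Ideal R) (MvPolynomial.X 0) ∧
    p (Ideal.Quotient.mk (d32Ideal R) (MvPolynomial.X k)) =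
      Ideal.Quotient.mk (sq2Ideal R) (MvPolynomial.X 1) ∧
    ∀ l : Fin 3, l ≠ j → l ≠ k → p (Ideal.Quotient.mk (d32Ideal R) (MvPolynomial.X l)) = 0

/-- `q` is the algebra map `W_{D²} → W_D` dual to `i₁ : d ↦ (d,0)` (when `fst = true`:
`X ↦ Z, Y ↦ 0`) or to `i₂ : d ↦ (0,d)` (`X ↦ 0, Y ↦ Z`). -/
def IsRestrict {R : Type*} [CommRing R] (fst : Bool)
    (q : WeilD2 R →ₐ[R] WeilD1 R) : Prop :=
  if fst then
    q (Ideal.Quotient.mk (sq2Ideal R) (MvPolynomial.X 0)) =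
        Ideal.Quotient.mk _ (Polynomial.X : Polynomial R) ∧
      q (Ideal.Quotient.mk (sq2Ideal R) (MvPolynomial.X 1)) = 0
  else
    q (Ideal.Quotient.mk (sq2Ideal R) (MvPolynomial.X 0)) = 0 ∧
      q (Ideal.Quotient.mk (sq2Ideal R) (MvPolynomial.X 1)) =
        Ideal.Quotient.mk _ (Polynomial.X : Polynomial R)

/-! `D{3}₂` is the union of the three coordinate planes `D²`, which meet pairwise in the
coordinate axes and all three in the origin. Dually, inclusion–exclusion recovers every
`b : W_{D{3}₂}` from its three projections: `b` is the sum of their images under the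
sections `X ↦ x_j, Y ↦ x_k`, minus the images of their restrictions to the three axes,
plus its constant term. For existence, write `a₁₂, a₁₃, a₂₃` as `R`-combinations of
`1, X, Y, XY` and take the evident candidate; the compatibilities, pushed from `W_D` back
into `W_{D²}` along `Z ↦ X`, `Z ↦ Y` and `Z ↦ 0`, say exactly that its projections are the
given ones. -/

open MvPolynomial (X)
open scoped algebraMap

noncomputable section

variable {R : Type*} [CommRing R]

namespace WeilD1

variable {A : Type*} [CommRing A] [Algebra R A]

def lift (z : A) (hz : z ^ 2 = 0) : WeilD1 R →ₐ[R] A :=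
  Ideal.Quotient.liftₐ _ (Polynomial.aeval z) fun a ha => by
    rw [← RingHom.mem_ker]
    refine Ideal.span_le.2 ?_ ha
    rintro _ rfl
    simp [RingHom.mem_ker, hz]

@[simp] lemma lift_X (z : A) (hz : z ^ 2 = 0) :
    lift (R := R) z hz (Ideal.Quotient.mk _ Polynomial.X) = z :=
  Polynomial.aeval_X z

end WeilD1

namespace WeilD2

abbrev x (i : Fin 2) : WeilD2 R := Ideal.Quotient.mk (sq2Ideal R) (X i)

lemma x_sq (i : Fin 2) : x (R := R) i ^ 2 = 0 := by
  rw [← map_pow, Ideal.Quotient.eq_zero_iff_mem]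
  exact Ideal.subset_span ⟨i, rfl⟩

lemma exists_coeffs (a : WeilD2 R) :
    ∃ c₀ c₁ c₂ c₃ : R,
      a = (c₀ : WeilD2 R) + (c₁ : WeilD2 R) * x 0 + (c₂ : WeilD2 R) * x 1 +
        (c₃ : WeilD2 R) * (x 0 * x 1) := by
  obtain ⟨P, rfl⟩ := Ideal.Quotient.mk_surjective a
  induction P using MvPolynomial.induction_on with
  | C r => exact ⟨r, 0, 0, 0, by simp only [algebraMap.coe_zero, zero_mul, add_zero]; rfl⟩
  | add P Q hP hQ =>
    obtain ⟨c₀, c₁, c₂, c₃, hP⟩ := hP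
    obtain ⟨d₀, d₁, d₂, d₃, hQ⟩ := hQ
    refine ⟨c₀ + d₀, c₁ + d₁, c₂ + d₂, c₃ + d₃, ?_⟩
    rw [map_add, hP, hQ]
    push_cast
    ring
  | mul_X P i hP =>
    obtain ⟨c₀, c₁, c₂, c₃, hP⟩ := hP
    rw [map_mul, hP]
    match i with
    | 0 =>
      refine ⟨0, c₀, 0, c₂, ?_⟩
      push_cast
      linear_combination (c₁ + c₃ * x 1) * x_sq (R := R) 0
    | 1 =>
      refine ⟨0, 0, c₀, c₁, ?_⟩
      push_cast
      linear_combination (c₂ + c₃ * x 0) * x_sq (R := R) 1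

variable {A : Type*} [CommRing A] [Algebra R A]

def lift (u v : A) (hu : u ^ 2 = 0) (hv : v ^ 2 = 0) : WeilD2 R →ₐ[R] A :=
  Ideal.Quotient.liftₐ _ (MvPolynomial.aeval ![u, v]) fun a ha => by
    rw [← RingHom.mem_ker]
    refine Ideal.span_le.2 ?_ ha
    rintro _ ⟨i, rfl⟩
    fin_cases i <;> simp [RingHom.mem_ker, hu, hv]

@[simp] lemma lift_x_zero (u v : A) (hu : u ^ 2 = 0) (hv : v ^ 2 = 0) :
    lift (R := R) u v hu hv (x 0) = u :=
  MvPolynomial.aeval_X _ 0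

@[simp] lemma lift_x_one (u v : A) (hu : u ^ 2 = 0) (hv : v ^ 2 = 0) :
    lift (R := R) u v hu hv (x 1) = v :=
  MvPolynomial.aeval_X _ 1

end WeilD2

namespace WeilD32

abbrev x (i : Fin 3) : WeilD32 R := Ideal.Quotient.mk (d32Ideal R) (X i)

lemma x_sq (i : Fin 3) : x (R := R) i ^ 2 = 0 := by
  rw [← map_pow, Ideal.Quotient.eq_zero_iff_mem]
  exact Ideal.subset_span (Or.inl ⟨i, rfl⟩)

lemma x_mul_x_mul_x : x (R := R) 0 * x 1 * x 2 = 0 := by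
  rw [← map_mul, ← map_mul, Ideal.Quotient.eq_zero_iff_mem]
  refine Ideal.subset_span (Or.inr ⟨id, ?_⟩)
  rw [Fin.prod_univ_three]
  rfl

lemma exists_coeffs (b : WeilD32 R) :
    ∃ r₀ r₁ r₂ r₃ r₀₁ r₀₂ r₁₂ : R,
      b = (r₀ : WeilD32 R) + (r₁ : WeilD32 R) * x 0 + (r₂ : WeilD32 R) * x 1 +
        (r₃ : WeilD32 R) * x 2 + (r₀₁ : WeilD32 R) * (x 0 * x 1) +
        (r₀₂ : WeilD32 R) * (x 0 * x 2) + (r₁₂ : WeilD32 R) * (x 1 * x 2) := by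
  obtain ⟨P, rfl⟩ := Ideal.Quotient.mk_surjective b
  induction P using MvPolynomial.induction_on with
  | C r =>
    exact ⟨r, 0, 0, 0, 0, 0, 0, by simp only [algebraMap.coe_zero, zero_mul, add_zero]; rfl⟩
  | add P Q hP hQ =>
    obtain ⟨c₀, c₁, c₂, c₃, c₀₁, c₀₂, c₁₂, hP⟩ := hP
    obtain ⟨d₀, d₁, d₂, d₃, d₀₁, d₀₂, d₁₂, hQ⟩ := hQ
    refine ⟨c₀ + d₀, c₁ + d₁, c₂ + d₂, c₃ + d₃, c₀₁ + d₀₁, c₀₂ + d₀₂, c₁₂ + d₁₂, ?_⟩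
    rw [map_add, hP, hQ]
    push_cast
    ring
  | mul_X P i hP =>
    obtain ⟨c₀, c₁, c₂, c₃, c₀₁, c₀₂, c₁₂, hP⟩ := hP
    rw [map_mul, hP]
    match i with
    | 0 =>
      refine ⟨0, c₀, 0, 0, c₂, c₃, 0, ?_⟩
      push_cast
      linear_combination (c₁ + c₀₁ * x 1 + c₀₂ * x 2) * x_sq (R := R) 0 +
        c₁₂ * x_mul_x_mul_x (R := R)
    | 1 =>
      refine ⟨0, 0, c₀, 0, c₁, 0, c₃, ?_⟩
      push_cast
      linear_combination (c₂ + c₀₁ * x 0 + c₁₂ * x 2) * x_sq (R := R) 1 +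
        c₀₂ * x_mul_x_mul_x (R := R)
    | 2 =>
      refine ⟨0, 0, 0, c₀, 0, c₁, c₂, ?_⟩
      push_cast
      linear_combination (c₃ + c₀₂ * x 0 + c₁₂ * x 1) * x_sq (R := R) 2 +
        c₀₁ * x_mul_x_mul_x (R := R)

variable {p₁₂ p₁₃ p₂₃ : WeilD32 R →ₐ[R] WeilD2 R}

theorem ext_of_isProjPair (h₁₂ : IsProjPair 0 1 p₁₂) (h₁₃ : IsProjPair 0 2 p₁₃)
    (h₂₃ : IsProjPair 1 2 p₂₃) {b b' : WeilD32 R} (e₁₂ : p₁₂ b = p₁₂ b')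
    (e₁₃ : p₁₃ b = p₁₃ b') (e₂₃ : p₂₃ b = p₂₃ b') : b = b' := by
  have h0 : (0 : WeilD32 R) ^ 2 = 0 := zero_pow two_ne_zero
  have inclusion_exclusion : ∀ c : WeilD32 R, c =
      WeilD2.lift (x 0) (x 1) (x_sq 0) (x_sq 1) (p₁₂ c) +
      WeilD2.lift (x 0) (x 2) (x_sq 0) (x_sq 2) (p₁₃ c) +
      WeilD2.lift (x 1) (x 2) (x_sq 1) (x_sq 2) (p₂₃ c) -
      WeilD2.lift (x 0) 0 (x_sq 0) h0 (p₁₂ c) -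
      WeilD2.lift 0 (x 1) h0 (x_sq 1) (p₁₂ c) -
      WeilD2.lift 0 (x 2) h0 (x_sq 2) (p₁₃ c) +
      WeilD2.lift 0 0 h0 h0 (p₁₂ c) := by
    intro c
    obtain ⟨r₀, r₁, r₂, r₃, r₀₁, r₀₂, r₁₂, rfl⟩ := exists_coeffs c
    simp [h₁₂.1, h₁₂.2.1, h₁₂.2.2 2 (by decide) (by decide), h₁₃.1, h₁₃.2.1,
      h₁₃.2.2 1 (by decide) (by decide), h₂₃.1, h₂₃.2.1, h₂₃.2.2 0 (by decide) (by decide)]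
    ring
  rw [inclusion_exclusion b, inclusion_exclusion b', e₁₂, e₁₃, e₂₃]

theorem exists_of_restrict_eq (h₁₂ : IsProjPair 0 1 p₁₂) (h₁₃ : IsProjPair 0 2 p₁₃)
    (h₂₃ : IsProjPair 1 2 p₂₃) {q₁ q₂ : WeilD2 R →ₐ[R] WeilD1 R}
    (hq₁ : IsRestrict true q₁) (hq₂ : IsRestrict false q₂) {a₁₂ a₁₃ a₂₃ : WeilD2 R}
    (c₁ : q₁ a₁₂ = q₁ a₁₃) (c₂ : q₂ a₁₂ = q₁ a₂₃) (c₃ : q₂ a₁₃ = q₂ a₂₃) :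
    ∃ a : WeilD32 R, p₁₂ a = a₁₂ ∧ p₁₃ a = a₁₃ ∧ p₂₃ a = a₂₃ := by
  obtain ⟨α₀, α₁, α₂, α₃, rfl⟩ := WeilD2.exists_coeffs a₁₂
  obtain ⟨β₀, β₁, β₂, β₃, rfl⟩ := WeilD2.exists_coeffs a₁₃
  obtain ⟨γ₀, γ₁, γ₂, γ₃, rfl⟩ := WeilD2.exists_coeffs a₂₃
  obtain ⟨hq₁X, hq₁Y⟩ := hq₁
  obtain ⟨hq₂X, hq₂Y⟩ := hq₂
  have h0 : (0 : WeilD2 R) ^ 2 = 0 := zero_pow two_ne_zero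
  have c₁X := congrArg (WeilD1.lift (WeilD2.x 0) (WeilD2.x_sq (R := R) 0)) c₁
  have c₂X := congrArg (WeilD1.lift (WeilD2.x 0) (WeilD2.x_sq (R := R) 0)) c₂
  have c₃Y := congrArg (WeilD1.lift (WeilD2.x 1) (WeilD2.x_sq (R := R) 1)) c₃
  have c₃0 := congrArg (WeilD1.lift 0 h0) c₃
  simp [hq₁X, hq₁Y, hq₂X, hq₂Y] at c₁X c₂X c₃Y c₃0
  refine ⟨(α₀ : WeilD32 R) + (α₁ : WeilD32 R) * x 0 + (α₂ : WeilD32 R) * x 1 +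
    (β₂ : WeilD32 R) * x 2 + (α₃ : WeilD32 R) * (x 0 * x 1) +
    (β₃ : WeilD32 R) * (x 0 * x 2) + (γ₃ : WeilD32 R) * (x 1 * x 2), ?_, ?_, ?_⟩ <;>
  simp [h₁₂.1, h₁₂.2.1, h₁₂.2.2 2 (by decide) (by decide), h₁₃.1, h₁₃.2.1,
    h₁₃.2.2 1 (by decide) (by decide), h₂₃.1, h₂₃.2.1, h₂₃.2.2 0 (by decide) (by decide)]
  · linear_combination c₁X
  · linear_combination c₂X + c₃Y - c₃0

end WeilD32

end

/-- The standard quasi-colimit representation of `D{3}₂`, dualized: giving an element of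
`W_{D{3}₂}` is equivalent to giving `a₁₂, a₁₃, a₂₃ ∈ W_{D²}` agreeing pairwise along the
restriction maps `W_{D²} → W_D` as specified by the shared index: the cone of the maps
`W_{i_{jk}}` is a limit cone. -/
theorem weilD32_limit_cone {R : Type*} [CommRing R]
    (p₁₂ p₁₃ p₂₃ : WeilD32 R →ₐ[R] WeilD2 R)
    (h₁₂ : IsProjPair 0 1 p₁₂) (h₁₃ : IsProjPair 0 2 p₁₃) (h₂₃ : IsProjPair 1 2 p₂₃)
    (q₁ q₂ : WeilD2 R →ₐ[R] WeilD1 R)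
    (hq₁ : IsRestrict true q₁) (hq₂ : IsRestrict false q₂)
    (a₁₂ a₁₃ a₂₃ : WeilD2 R)
    (c₁ : q₁ a₁₂ = q₁ a₁₃) (c₂ : q₂ a₁₂ = q₁ a₂₃) (c₃ : q₂ a₁₃ = q₂ a₂₃) :
    ∃! a : WeilD32 R, p₁₂ a = a₁₂ ∧ p₁₃ a = a₁₃ ∧ p₂₃ a = a₂₃ := by
  obtain ⟨a, ha₁₂, ha₁₃, ha₂₃⟩ := WeilD32.exists_of_restrict_eq h₁₂ h₁₃ h₂₃ hq₁ hq₂ c₁ c₂ c₃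
  refine ⟨a, ⟨ha₁₂, ha₁₃, ha₂₃⟩, fun b ⟨hb₁₂, hb₁₃, hb₂₃⟩ => ?_⟩
  exact WeilD32.ext_of_isProjPair h₁₂ h₁₃ h₂₃ (hb₁₂.trans ha₁₂.symm) (hb₁₃.trans ha₁₃.symm)
    (hb₂₃.trans ha₂₃.symm)
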